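/- Every interval exchange transformation T of [0,1) having balanced partition lengths with some constant c > 0 is uniquely ergodic: Lebesgue measure on [0,1) is the unique T-invariant Borel probability measure on [0,1). -/

import Mathlib

/-!
Fix a point `x` and a scale `j`. The atom of `P_j` containing `x` has length at most `c/j` and is
moved rigidly by `T, …, T^{j-1}`; its left end is a point `T^{-k} β_i`, whose orbit segment of
length `j` cuts `[0,1)` into gaps of length at most `c/j`. Hence the first `j` iterates of `x`
visit every interval `[u,v)` of length at least `c/j` at least `j (v-u)/c - 2` times. Integrating
against an invariant probability measure `ρ` gives `ρ [u,v) ≥ (v-u)/c`, so by outer regularity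
Lebesgue measure on `[0,1)` is at most `c ρ`, in particular absolutely continuous with respect
to `ρ`. Applied to `ρ` conditioned on an invariant set and on its complement, this makes every
invariant `ρ` ergodic; Lebesgue measure is invariant and absolutely continuous with respect to
the ergodic measure `ρ`, so the two coincide.
-/

open MeasureTheory Filter Set
open scoped ENNReal

/-- `a` and `b` are consecutive points of the set `S` of partition points, i.e. the
interval with endpoints `a` and `b` is one of the subintervals of the partition of
`[0,1)` determined by `S`. -/
def IsGap (S : Set ℝ) (a b : ℝ) : Prop :=
  a ∈ S ∧ b ∈ S ∧ a < b ∧ ∀ z ∈ S, z ≤ a ∨ b ≤ z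

/-- The set of points (including the endpoints `0` and `1` of `[0,1)`) determining the
partition `P_j` of `[0,1)` by the points `T^{-k} β_i`, `1 ≤ i ≤ r-1`, `0 ≤ k ≤ j-1`,
where `Tinv` denotes the inverse of the interval exchange transformation `T`. -/
def partPts (r : ℕ) (β : ℕ → ℝ) (Tinv : ℝ → ℝ) (j : ℕ) : Set ℝ :=
  {0, 1} ∪ {x | ∃ i k : ℕ, 1 ≤ i ∧ i < r ∧ k < j ∧ x = Tinv^[k] (β i)}

/-- The set of points (including `0` and `1`) determining the partition of `[0,1)` by the
points `T^{-k+l} β_i`, `0 ≤ l ≤ j-1` (for fixed `i` and `k`). -/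
def partPts2 (β : ℕ → ℝ) (T Tinv : ℝ → ℝ) (i k j : ℕ) : Set ℝ :=
  {0, 1} ∪ {x | ∃ l : ℕ, l < j ∧ x = T^[l] (Tinv^[k] (β i))}

/-- An IET `T` (with discontinuities `β_0 < … < β_r` and inverse `Tinv`) has balanced
partition lengths with constant `c > 0`:
(i) all subintervals of the partition `P_j` have length between `1/(cj)` and `c/j`;
(ii) for all `0 ≤ i ≤ r-1` and `0 ≤ k ≤ j-1`, all subintervals of the partition of
`[0,1)` by the points `T^{-k+l} β_i`, `0 ≤ l ≤ j-1`, have length between `1/(cj)` and `c/j`. -/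
def BalancedPartitionLengths (r : ℕ) (β : ℕ → ℝ) (T Tinv : ℝ → ℝ) (c : ℝ) : Prop :=
  (∀ j : ℕ, 1 ≤ j → ∀ a b : ℝ, IsGap (partPts r β Tinv j) a b →
    1 / (c * j) ≤ b - a ∧ b - a ≤ c / j) ∧
  (∀ j : ℕ, 1 ≤ j → ∀ i : ℕ, i < r → ∀ k : ℕ, k < j →
    ∀ a b : ℝ, IsGap (partPts2 β T Tinv i k j) a b →
      1 / (c * j) ≤ b - a ∧ b - a ≤ c / j)

/-- The Birkhoff sum `h^{(j)}(x) = ∑_{k=0}^{j-1} h(T^k x)`. -/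
noncomputable def birkhoff (T : ℝ → ℝ) (h : ℝ → ℝ) (j : ℕ) (x : ℝ) : ℝ :=
  ∑ k ∈ Finset.range j, h (T^[k] x)

/-- The function `f(x) = ∑_{i=0}^{r-1} (-c_i⁺ log{x - β_i}) + ∑_{i=0}^{r-1} (-c_{i+1}⁻ log{β_{i+1} - x})`,
where `{·}` is the fractional part. -/
noncomputable def logf (r : ℕ) (β : ℕ → ℝ) (cp cm : ℕ → ℝ) (x : ℝ) : ℝ :=
  (∑ i ∈ Finset.range r, -(cp i * Real.log (Int.fract (x - β i)))) +
  (∑ i ∈ Finset.range r, -(cm (i + 1) * Real.log (Int.fract (β (i + 1) - x))))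

section Gaps

variable {S : Set ℝ}

lemma exists_isGap_of_le_of_lt (hS : S.Finite) {p q x : ℝ} (hp : p ∈ S) (hq : q ∈ S)
    (hpx : p ≤ x) (hxq : x < q) : ∃ a b, IsGap S a b ∧ a ≤ x ∧ x < b := by
  obtain ⟨a, ⟨haS, hax⟩, ha⟩ :=
    Set.exists_max_image {z ∈ S | z ≤ x} id (hS.subset (sep_subset _ _)) ⟨p, hp, hpx⟩
  obtain ⟨b, ⟨hbS, hxb⟩, hb⟩ :=
    Set.exists_min_image {z ∈ S | x < z} id (hS.subset (sep_subset _ _)) ⟨q, hq, hxq⟩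
  refine ⟨a, b, ⟨haS, hbS, hax.trans_lt hxb, fun z hz => ?_⟩, hax, hxb⟩
  rcases le_or_gt z x with h | h
  · exact Or.inl (ha z ⟨hz, h⟩)
  · exact Or.inr (hb z ⟨hz, h⟩)

lemma sub_le_ncard_mul_of_isGap (hS : S.Finite) {g : ℝ} (hg : ∀ a b, IsGap S a b → b - a ≤ g)
    {a b : ℝ} (ha : a ∈ S) (hb : b ∈ S) (hab : a ≤ b) : b - a ≤ (S ∩ Ico a b).ncard * g := by
  induction hn : (S ∩ Ico a b).ncard generalizing b with
  | zero =>
    have hempty : S ∩ Ico a b = ∅ := (Set.ncard_eq_zero (hS.subset inter_subset_left)).1 hn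
    have hba : b ≤ a := not_lt.1 fun h => hempty.subset ⟨ha, le_rfl, h⟩
    simp only [CharP.cast_eq_zero, zero_mul]
    linarith
  | succ n ih =>
    obtain ⟨p, ⟨hpS, hap, hpb⟩, hp⟩ := Set.exists_max_image (S ∩ Ico a b) id
      (hS.subset inter_subset_left) (Set.nonempty_of_ncard_ne_zero (by omega))
    have hgap : IsGap S p b := ⟨hpS, hb, hpb, fun z hz => by
      by_contra! h
      exact (hp z ⟨hz, hap.trans h.1.le, h.2⟩).not_gt h.1⟩
    have hcard : (S ∩ Ico a p).ncard = n := by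
      have : S ∩ Ico a p = (S ∩ Ico a b) \ {p} := by
        ext z
        simp only [mem_inter_iff, mem_Ico, Set.mem_sdiff, mem_singleton_iff]
        constructor
        · rintro ⟨hz, haz, hzp⟩
          exact ⟨⟨hz, haz, hzp.trans hpb⟩, hzp.ne⟩
        · rintro ⟨⟨hz, haz, hzb⟩, hzp⟩
          exact ⟨hz, haz, lt_of_le_of_ne (hp z ⟨hz, haz, hzb⟩) hzp⟩
      rw [this, Set.ncard_sdiff_singleton_of_mem (s := S ∩ Ico a b) ⟨hpS, hap, hpb⟩, hn]
      rfl
    have := ih hpS hap hcard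
    have := hg p b hgap
    push_cast
    linarith

lemma sub_le_ncard_Ioo_add_one_mul (hS : S.Finite) {g : ℝ} (hg0 : 0 ≤ g)
    (hg : ∀ a b, IsGap S a b → b - a ≤ g) {p q u w : ℝ} (hp : p ∈ S) (hpu : p ≤ u)
    (hq : q ∈ S) (hwq : w ≤ q) (huw : u ≤ w) : w - u ≤ ((S ∩ Ioo u w).ncard + 1) * g := by
  obtain ⟨a, ⟨haS, hau⟩, ha⟩ :=
    Set.exists_max_image {z ∈ S | z ≤ u} id (hS.subset (sep_subset _ _)) ⟨p, hp, hpu⟩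
  obtain ⟨b, ⟨hbS, hwb⟩, hb⟩ :=
    Set.exists_min_image {z ∈ S | w ≤ z} id (hS.subset (sep_subset _ _)) ⟨q, hq, hwq⟩
  have hsub : S ∩ Ico a b ⊆ insert a (S ∩ Ioo u w) := by
    rintro z ⟨hz, haz, hzb⟩
    rcases le_or_gt z u with hzu | hzu
    · exact Or.inl (le_antisymm (ha z ⟨hz, hzu⟩) haz)
    · exact Or.inr ⟨hz, hzu, lt_of_not_ge fun hwz => (hb z ⟨hz, hwz⟩).not_gt hzb⟩
  have hcard : ((S ∩ Ico a b).ncard : ℝ) ≤ (S ∩ Ioo u w).ncard + 1 := by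
    exact_mod_cast (Set.ncard_le_ncard hsub ((hS.subset inter_subset_left).insert a)).trans
      (Set.ncard_insert_le _ _)
  calc w - u ≤ b - a := by linarith
    _ ≤ (S ∩ Ico a b).ncard * g :=
      sub_le_ncard_mul_of_isGap hS hg haS hbS (by linarith)
    _ ≤ _ := mul_le_mul_of_nonneg_right hcard hg0

end Gaps

lemma Set.LeftInvOn.iterate {α : Type*} {f g : α → α} {s : Set α} (h : LeftInvOn g f s)
    (hf : MapsTo f s s) : ∀ n, LeftInvOn g^[n] f^[n] s
  | 0 => fun _ _ => rfl
  | n + 1 => by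
    have := h.comp (h.iterate hf n) hf
    rwa [← Function.iterate_succ', ← Function.iterate_succ] at this

lemma Set.EqOn.iterate {α : Type*} {f g : α → α} {s : Set α} (h : EqOn f g s)
    (hg : MapsTo g s s) : ∀ n, EqOn f^[n] g^[n] s
  | 0 => fun _ _ => rfl
  | n + 1 => fun x hx => by
    rw [Function.iterate_succ_apply', Function.iterate_succ_apply', h.iterate hg n hx,
      h (hg.iterate n hx)]

lemma partPts_finite (r : ℕ) (β : ℕ → ℝ) (Tinv : ℝ → ℝ) (j : ℕ) :
    (partPts r β Tinv j).Finite := by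
  refine (Set.toFinite {0, 1}).union
    ((((Set.finite_Iio r).prod (Set.finite_Iio j)).image
      fun p : ℕ × ℕ => Tinv^[p.2] (β p.1)).subset ?_)
  rintro x ⟨i, k, -, hi, hk, rfl⟩
  exact ⟨(i, k), ⟨hi, hk⟩, rfl⟩

lemma partPts2_finite (β : ℕ → ℝ) (T Tinv : ℝ → ℝ) (i k j : ℕ) :
    (partPts2 β T Tinv i k j).Finite := by
  refine (Set.toFinite {0, 1}).union
    (((Set.finite_Iio j).image fun l => T^[l] (Tinv^[k] (β i))).subset ?_)
  rintro x ⟨l, hl, rfl⟩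
  exact ⟨l, hl, rfl⟩

structure IsIntervalExchange (r : ℕ) (β : ℕ → ℝ) (T : ℝ → ℝ) : Prop where
  zero : β 0 = 0
  last : β r = 1
  lt : ∀ i j : ℕ, i < j → j ≤ r → β i < β j
  bijOn : BijOn T (Ico 0 1) (Ico 0 1)
  exists_translation : ∀ i : ℕ, i < r → ∃ v : ℝ, ∀ x ∈ Ico (β i) (β (i + 1)), T x = x + v

namespace IsIntervalExchange

variable {r : ℕ} {β : ℕ → ℝ} {T : ℝ → ℝ}

lemma mono {i j : ℕ} (hT : IsIntervalExchange r β T) (hij : i ≤ j) (hj : j ≤ r) : β i ≤ β j :=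
  hij.eq_or_lt.elim (fun h => h ▸ le_rfl) fun h => (hT.lt i j h hj).le

lemma piece_subset (hT : IsIntervalExchange r β T) {i : ℕ} (hi : i < r) :
    Ico (β i) (β (i + 1)) ⊆ Ico 0 1 := fun _ hx =>
  ⟨hT.zero ▸ (hT.mono (Nat.zero_le i) hi.le).trans hx.1,
    hT.last ▸ hx.2.trans_le (hT.mono hi le_rfl)⟩

lemma exists_mem_piece (hT : IsIntervalExchange r β T) {x : ℝ} (hx : x ∈ Ico (0 : ℝ) 1) :
    ∃ i < r, x ∈ Ico (β i) (β (i + 1)) := by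
  have hr : r ≠ 0 := by rintro rfl; linarith [hT.zero, hT.last]
  have hlast : x < β (r - 1 + 1) := by rw [Nat.sub_add_cancel (by omega), hT.last]; exact hx.2
  have hex : ∃ i, x < β (i + 1) := ⟨r - 1, hlast⟩
  classical
  refine ⟨Nat.find hex, ?_, ?_, Nat.find_spec hex⟩
  · have := Nat.find_min' hex hlast
    omega
  · rcases Nat.eq_zero_or_eq_succ_pred (Nat.find hex) with h | h
    · rw [h, hT.zero]; exact hx.1
    · rw [h]
      exact not_lt.1 (Nat.find_min hex (by omega))

open Function in
lemma pairwise_disjoint_piece (hT : IsIntervalExchange r β T) :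
    Pairwise (Disjoint on (fun i : Fin r => Ico (β i) (β (i + 1)))) := by
  intro i k hik
  rcases lt_or_gt_of_ne (Fin.val_injective.ne hik) with h | h
  · exact Set.Ico_disjoint_Ico_same.mono_left (Ico_subset_Ico_right (hT.mono h k.2.le))
  · exact (Set.Ico_disjoint_Ico_same.mono_left (Ico_subset_Ico_right (hT.mono h i.2.le))).symm

lemma eq_add_sub_of_forall_notMem_Ioo (hT : IsIntervalExchange r β T) {p q : ℝ}
    (hpq : Ico p q ⊆ Ico 0 1) (hcut : ∀ m, 1 ≤ m → m < r → β m ∉ Ioo p q) :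
    ∀ y ∈ Ico p q, T y = T p + (y - p) := by
  intro y hy
  obtain ⟨m, hm, hpm⟩ := hT.exists_mem_piece (hpq ⟨le_rfl, hy.1.trans_lt hy.2⟩)
  have hqm : q ≤ β (m + 1) := by
    by_contra! h
    rcases (show m + 1 ≤ r from hm).lt_or_eq with hm1 | hm1
    · exact hcut (m + 1) (Nat.le_add_left 1 m) hm1 ⟨hpm.2, h⟩
    · rw [hm1, hT.last] at h
      exact lt_irrefl _ (hpq ⟨hpm.2.le.trans (by rw [hm1, hT.last]), h⟩).2
  obtain ⟨v, hv⟩ := hT.exists_translation m hm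
  rw [hv y ⟨hpm.1.trans hy.1, hy.2.trans_le hqm⟩, hv p hpm]
  ring

/-- A point of the atom sent by `T^l` onto a discontinuity `β m` would itself be the partition
point `T^{-l} β m`. -/
lemma iterate_eq_add_sub_of_isGap (hT : IsIntervalExchange r β T) {Tinv : ℝ → ℝ}
    (hTinv : LeftInvOn Tinv T (Ico 0 1)) {j : ℕ} {a b : ℝ}
    (hab : IsGap (partPts r β Tinv j) a b) (ha : 0 ≤ a) (hb : b ≤ 1) :
    ∀ l ≤ j, ∀ y ∈ Ico a b, T^[l] y = T^[l] a + (y - a) := by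
  have hI : Ico a b ⊆ Ico 0 1 := Ico_subset_Ico ha hb
  intro l
  induction l with
  | zero => intro _ y _; simp
  | succ l ih =>
    intro hl y hy
    have ih := ih (by omega)
    have hpre : ∀ z ∈ Ico (T^[l] a) (T^[l] a + (b - a)),
        a + (z - T^[l] a) ∈ Ico a b ∧ T^[l] (a + (z - T^[l] a)) = z := fun z hz =>
      have hmem : a + (z - T^[l] a) ∈ Ico a b := ⟨by linarith [hz.1], by linarith [hz.2]⟩
      ⟨hmem, by rw [ih _ hmem]; ring⟩
    have htrans := hT.eq_add_sub_of_forall_notMem_Ioo (p := T^[l] a) (q := T^[l] a + (b - a))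
      (fun z hz => (hpre z hz).2 ▸ hT.bijOn.mapsTo.iterate l (hI (hpre z hz).1))
      (fun m hm1 hmr hm => by
        obtain ⟨hz, hTz⟩ := hpre (β m) ⟨hm.1.le, hm.2⟩
        have hzP : a + (β m - T^[l] a) ∈ partPts r β Tinv j := Or.inr
          ⟨m, l, hm1, hmr, by omega,
            (hTinv.iterate hT.bijOn.mapsTo l (hI hz)).symm.trans (congrArg Tinv^[l] hTz)⟩
        rcases hab.2.2.2 _ hzP with h | h <;> linarith [hm.1, hz.2])
    rw [Function.iterate_succ_apply', Function.iterate_succ_apply', ih y hy,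
      htrans _ ⟨by linarith [hy.1], by linarith [hy.2]⟩]
    ring

open Finset in
lemma div_sub_two_le_card_iterate_mem_Ico (hT : IsIntervalExchange r β T) {Tinv : ℝ → ℝ}
    (hTinv : LeftInvOn Tinv T (Ico 0 1)) {j : ℕ} (hj : 1 ≤ j) {g : ℝ} (hg : 0 < g)
    (hP : ∀ a b, IsGap (partPts r β Tinv j) a b → b - a ≤ g)
    (hQ : ∀ i < r, ∀ k < j, ∀ a b, IsGap (partPts2 β T Tinv i k j) a b → b - a ≤ g)
    {u v x : ℝ} (hu : 0 ≤ u) (hv : v ≤ 1) (hguv : g ≤ v - u) (hx : x ∈ Ico (0 : ℝ) 1) :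
    (v - u) / g - 2 ≤ #{l ∈ range j | T^[l] x ∈ Ico u v} := by
  have h0P : (0 : ℝ) ∈ partPts r β Tinv j := Or.inl (Or.inl rfl)
  have h1P : (1 : ℝ) ∈ partPts r β Tinv j := Or.inl (Or.inr rfl)
  obtain ⟨a, b, hab, hax, hxb⟩ :=
    exists_isGap_of_le_of_lt (partPts_finite r β Tinv j) h0P h1P hx.1 hx.2
  have ha : 0 ≤ a := (hab.2.2.2 0 h0P).resolve_right fun h => by linarith [hx.1]
  have hb : b ≤ 1 := (hab.2.2.2 1 h1P).resolve_left fun h => by linarith [hx.2]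
  obtain ⟨i, hi, k, hk, rfl⟩ : ∃ i < r, ∃ k < j, a = Tinv^[k] (β i) := by
    rcases hab.1 with (h | h) | ⟨i, k, -, hi, hk, h⟩
    · have hr : 0 < r := Nat.pos_of_ne_zero (by rintro rfl; linarith [hT.zero, hT.last])
      exact ⟨0, hr, 0, hj, by rw [h]; exact hT.zero.symm⟩
    · exact absurd (h ▸ hax) (not_le.2 hx.2)
    · exact ⟨i, hi, k, hk, h⟩
  set a := Tinv^[k] (β i)
  have htrans := hT.iterate_eq_add_sub_of_isGap hTinv hab ha hb
  set Q := partPts2 β T Tinv i k j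
  have hcount := sub_le_ncard_Ioo_add_one_mul (partPts2_finite β T Tinv i k j) hg.le
    (hQ i hi k hk) (p := 0) (q := 1) (w := v - g) (Or.inl (Or.inl rfl)) hu (Or.inl (Or.inr rfl))
    (by linarith) (by linarith)
  -- the orbit point `T^l a` in `(u, v - g)` forces `T^l x ∈ [u, v)`, since `x - a < g`
  have hsub : Q ∩ Ioo u (v - g) ⊆
      (fun l => T^[l] a) '' ↑{l ∈ range j | T^[l] x ∈ Ico u v} := by
    rintro z ⟨(hz | hz) | ⟨l, hl, rfl⟩, hzu, hzw⟩
    · rw [mem_singleton_iff.1 hz] at hzu; linarith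
    · rw [mem_singleton_iff.1 hz] at hzw; linarith
    · refine ⟨l, mem_filter.2 ⟨mem_range.2 hl, ?_⟩, rfl⟩
      rw [htrans l hl.le x ⟨hax, hxb⟩]
      constructor <;> linarith [hP _ _ hab]
  have hcard : ((Q ∩ Ioo u (v - g)).ncard : ℝ) ≤ #{l ∈ range j | T^[l] x ∈ Ico u v} := by
    exact_mod_cast (Set.ncard_le_ncard hsub (Set.toFinite _)).trans
      ((Set.ncard_image_le (Set.toFinite _)).trans (Set.ncard_coe_finset _).le)
  have hdiv : (v - u) / g - 2 = (v - g - u) / g - 1 := by field_simp; ring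
  rw [hdiv, sub_le_iff_le_add, div_le_iff₀ hg]
  exact hcount.trans (mul_le_mul_of_nonneg_right (by linarith) hg.le)

end IsIntervalExchange

open Finset in
lemma birkhoffSum_indicator_one {α : Type*} (f : α → α) (s : Set α) [DecidablePred (· ∈ s)]
    (n : ℕ) (x : α) :
    birkhoffSum f (s.indicator 1) n x = (#{k ∈ range n | f^[k] x ∈ s} : ℝ) := by
  simp [birkhoffSum, Set.indicator_apply]

section ErgodicTheory

variable {α : Type*} [MeasurableSpace α] {f : α → α}

lemma MeasureTheory.MeasurePreserving.integral_birkhoffSum_indicator {μ : Measure α}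
    [IsFiniteMeasure μ] (hf : MeasurePreserving f μ μ) {s : Set α} (hs : MeasurableSet s)
    (n : ℕ) : ∫ x, birkhoffSum f (s.indicator 1) n x ∂μ = n * μ.real s := by
  have hk : ∀ k, ∫ x, s.indicator (1 : α → ℝ) (f^[k] x) ∂μ = μ.real s := fun k => by
    simp_rw [← Set.indicator_comp_right, Pi.one_comp]
    rw [integral_indicator_one ((hf.iterate k).measurable hs), measureReal_def,
      (hf.iterate k).measure_preimage hs.nullMeasurableSet, measureReal_def]
  simp only [birkhoffSum]
  rw [integral_finsetSum _ fun k _ => ?_]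
  · simp [hk]
  · exact (hf.iterate k).integrable_comp_of_integrable ((integrable_const (1 : ℝ)).indicator hs)

lemma MeasureTheory.MeasurePreserving.le_measureReal_of_le_birkhoffSum {μ : Measure α}
    [IsProbabilityMeasure μ] (hf : MeasurePreserving f μ μ) {s : Set α} (hs : MeasurableSet s)
    {a K : ℝ} (h : ∀ᶠ n : ℕ in atTop, ∀ᵐ x ∂μ, n * a - K ≤ birkhoffSum f (s.indicator 1) n x) :
    a ≤ μ.real s := by
  have hle : ∀ᶠ n : ℕ in atTop, a ≤ μ.real s + K / n := by
    filter_upwards [h, eventually_gt_atTop 0] with n hn hn0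
    have hint := integral_mono_ae (integrable_const _) ?_ hn
    · rw [integral_const, hf.integral_birkhoffSum_indicator hs, probReal_univ, one_smul] at hint
      have hn0' : (0 : ℝ) < n := by exact_mod_cast hn0
      rw [← sub_le_iff_le_add', le_div_iff₀ hn0']
      nlinarith
    · exact integrable_finsetSum _ fun k _ =>
        (hf.iterate k).integrable_comp_of_integrable ((integrable_const (1 : ℝ)).indicator hs)
  refine ge_of_tendsto ?_ hle
  simpa using tendsto_const_nhds.add (tendsto_const_div_atTop_nhds_zero_nat K)

open ProbabilityTheory in
/-- Conditioning an invariant measure on an invariant set `s` or on its complement gives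
invariant measures, singular to each other; `ν` cannot be absolutely continuous with respect
to both. -/
lemma Ergodic.of_forall_absolutelyContinuous {ν : Measure α} (hν : ν ≠ 0)
    (h : ∀ ρ : Measure α, IsProbabilityMeasure ρ → MeasurePreserving f ρ ρ → ν ≪ ρ)
    {μ : Measure α} [IsProbabilityMeasure μ] (hμ : MeasurePreserving f μ μ) : Ergodic f μ := by
  refine ⟨hμ, ⟨fun s hs hfs => ?_⟩⟩
  have hcond : ∀ t, MeasurableSet t → f ⁻¹' t = t → μ t ≠ 0 → ν tᶜ = 0 := fun t ht hft hμt => by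
    have hinv : MeasurePreserving f μ[|t] μ[|t] := by
      refine .smul_measure ?_ _
      convert hμ.restrict_preimage ht
      exact hft.symm
    exact h _ (cond_isProbabilityMeasure hμt) hinv (by simp [ProbabilityTheory.cond_apply, ht])
  by_contra H
  obtain ⟨hs0, hsc0⟩ : μ s ≠ 0 ∧ μ sᶜ ≠ 0 := by
    simpa [eventuallyConst_set, ae_iff, and_comm] using! H
  have h1 := hcond s hs hfs hs0
  have h2 := hcond sᶜ hs.compl (by rw [preimage_compl, hfs]) hsc0
  rw [compl_compl] at h2
  exact hν (Measure.measure_univ_eq_zero.1 (by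
    rw [← union_compl_self s]; exact measure_union_null h2 h1))

end ErgodicTheory

def gridCell (m k : ℕ) : Set ℝ := Ico ((k : ℝ) / m) (((k : ℝ) + 1) / m)

open Function in
lemma pairwise_disjoint_gridCell (m : ℕ) : Pairwise (Disjoint on gridCell m) := by
  have := (show Monotone fun k : ℕ => (k : ℝ) / m from fun a b hab =>
    div_le_div_of_nonneg_right (by exact_mod_cast hab) m.cast_nonneg).pairwise_disjoint_on_Ico_succ
  simp only [Order.succ_eq_add_one, Nat.cast_add, Nat.cast_one] at this
  exact this

lemma eventually_exists_gridCell_subset {U : Set ℝ} (hU : IsOpen U) {x : ℝ} (hxU : x ∈ U)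
    (hx : x ∈ Ico (0 : ℝ) 1) : ∀ᶠ m : ℕ in atTop, ∃ k < m, x ∈ gridCell m k ∧ gridCell m k ⊆ U := by
  obtain ⟨ε, hε, hball⟩ := Metric.isOpen_iff.1 hU x hxU
  obtain ⟨N, hN⟩ := exists_nat_one_div_lt hε
  filter_upwards [eventually_ge_atTop (N + 1)] with m hm
  have hm0 : (0 : ℝ) < m := Nat.cast_pos.2 (by omega)
  have hεm : 1 / (m : ℝ) < ε :=
    (one_div_le_one_div_of_le (by positivity) (by exact_mod_cast hm)).trans_lt hN
  have hxk : x ∈ gridCell m ⌊x * m⌋₊ := by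
    rw [gridCell, mem_Ico, div_le_iff₀ hm0, lt_div_iff₀ hm0]
    exact ⟨Nat.floor_le (by nlinarith [hx.1]), Nat.lt_floor_add_one _⟩
  refine ⟨⌊x * m⌋₊, (Nat.floor_lt (by nlinarith [hx.1])).2 (by nlinarith [hx.2]), hxk,
    fun y hy => hball ?_⟩
  have hwidth : ((⌊x * m⌋₊ : ℝ) + 1) / m - ⌊x * m⌋₊ / m = 1 / m := by ring
  rw [Metric.mem_ball, Real.dist_eq, abs_sub_lt_iff]
  constructor <;> linarith [hy.1, hy.2, hxk.1, hxk.2]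

lemma volume_restrict_Ico_le_of_isOpen {ρ : Measure ℝ}
    (h : ∀ u v : ℝ, 0 ≤ u → u < v → v ≤ 1 → volume (Ico u v) ≤ ρ (Ico u v))
    {U : Set ℝ} (hU : IsOpen U) : volume.restrict (Ico (0 : ℝ) 1) U ≤ ρ U := by
  classical
  set W : ℕ → Set ℝ := fun m => ⋃ k ∈ {k ∈ Finset.range m | gridCell m k ⊆ U}, gridCell m k
  have hW : ∀ m, volume (W m) ≤ ρ U := fun m =>
    calc volume (W m) ≤ ∑ k ∈ {k ∈ Finset.range m | gridCell m k ⊆ U}, volume (gridCell m k) :=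
          measure_biUnion_finset_le _ _
      _ ≤ ∑ k ∈ {k ∈ Finset.range m | gridCell m k ⊆ U}, ρ (gridCell m k) := by
          refine Finset.sum_le_sum fun k hk => ?_
          have hkm := Finset.mem_range.1 (Finset.mem_filter.1 hk).1
          have hm : (0 : ℝ) < m := Nat.cast_pos.2 (by omega)
          refine h _ _ (by positivity) (by gcongr; linarith) ?_
          rw [div_le_one hm]
          exact_mod_cast hkm
      _ = ρ (W m) := (measure_biUnion_finset ((pairwise_disjoint_gridCell m).set_pairwise _)
          fun _ _ => measurableSet_Ico).symm
      _ ≤ ρ U := measure_mono (iUnion₂_subset fun k hk => (Finset.mem_filter.1 hk).2)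
  have hcover : U ∩ Ico 0 1 ⊆ ⋃ N, ⋂ m ≥ N, W m := fun x ⟨hxU, hx⟩ => by
    obtain ⟨N, hN⟩ := eventually_atTop.1 (eventually_exists_gridCell_subset hU hxU hx)
    refine mem_iUnion.2 ⟨N, mem_iInter₂.2 fun m hm => ?_⟩
    obtain ⟨k, hkm, hxk, hkU⟩ := hN m hm
    exact mem_biUnion (Finset.mem_filter.2 ⟨Finset.mem_range.2 hkm, hkU⟩) hxk
  have hmono : Monotone fun N => ⋂ m ≥ N, W m := fun a b hab =>
    biInter_mono (fun m (hm : b ≤ m) => hab.trans hm) fun _ _ => subset_rfl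
  calc volume.restrict (Ico (0 : ℝ) 1) U = volume (U ∩ Ico 0 1) :=
        Measure.restrict_apply hU.measurableSet
    _ ≤ volume (⋃ N, ⋂ m ≥ N, W m) := measure_mono hcover
    _ = ⨆ N, volume (⋂ m ≥ N, W m) := hmono.measure_iUnion
    _ ≤ ρ U := iSup_le fun N => (measure_mono (biInter_subset_of_mem le_rfl)).trans (hW N)

lemma MeasureTheory.Measure.le_of_forall_isOpen_le {X : Type*} [TopologicalSpace X]
    [MeasurableSpace X] {μ ν : Measure X} [ν.OuterRegular] (h : ∀ U, IsOpen U → μ U ≤ ν U) :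
    μ ≤ ν :=
  Measure.le_iff'.2 fun s => by
    rw [s.measure_eq_iInf_isOpen ν]
    exact le_iInf₂ fun U hsU => le_iInf fun hU => (measure_mono hsU).trans (h U hU)

/-- A measurable version of the interval exchange: `T` itself need not be measurable off `[0,1)`.
Sending the complement of `[0,1)` to `0` forces every invariant measure to live on `[0,1)`. -/
noncomputable def translateOnPieces (r : ℕ) (β v : ℕ → ℝ) (x : ℝ) : ℝ :=
  ∑ i : Fin r, (Ico (β i) (β (i + 1))).indicator (· + v i) x

lemma measurable_translateOnPieces (r : ℕ) (β v : ℕ → ℝ) :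
    Measurable (translateOnPieces r β v) :=
  Finset.measurable_sum _ fun _ _ => (measurable_id.add_const _).indicator measurableSet_Ico

namespace IsIntervalExchange

variable {r : ℕ} {β : ℕ → ℝ} {T : ℝ → ℝ} {v : ℕ → ℝ}

lemma iUnion_piece (hT : IsIntervalExchange r β T) :
    ⋃ i : Fin r, Ico (β i) (β (i + 1)) = Ico 0 1 :=
  Subset.antisymm (iUnion_subset fun i => hT.piece_subset i.2) fun _ hx =>
    let ⟨i, hi, hxi⟩ := hT.exists_mem_piece hx
    mem_iUnion.2 ⟨⟨i, hi⟩, hxi⟩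

lemma translateOnPieces_eq (hT : IsIntervalExchange r β T) (i : Fin r) {x : ℝ}
    (hx : x ∈ Ico (β i) (β (i + 1))) : translateOnPieces r β v x = x + v i := by
  rw [translateOnPieces, Finset.sum_eq_single i (fun k _ hki => indicator_of_notMem
    ((hT.pairwise_disjoint_piece hki).notMem_of_mem_right hx) _) (by simp), indicator_of_mem hx]

lemma translateOnPieces_eqOn (hT : IsIntervalExchange r β T)
    (hv : ∀ i < r, ∀ x ∈ Ico (β i) (β (i + 1)), T x = x + v i) :
    EqOn (translateOnPieces r β v) T (Ico 0 1) := fun x hx => by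
  obtain ⟨i, hi, hxi⟩ := hT.exists_mem_piece hx
  rw [hT.translateOnPieces_eq ⟨i, hi⟩ hxi, hv i hi x hxi]

lemma translateOnPieces_mem (hT : IsIntervalExchange r β T)
    (hv : ∀ i < r, ∀ x ∈ Ico (β i) (β (i + 1)), T x = x + v i) (x : ℝ) :
    translateOnPieces r β v x ∈ Ico (0 : ℝ) 1 := by
  by_cases hx : x ∈ Ico (0 : ℝ) 1
  · rw [hT.translateOnPieces_eqOn hv hx]
    exact hT.bijOn.mapsTo hx
  · rw [translateOnPieces, Finset.sum_eq_zero fun i _ =>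
      indicator_of_notMem (fun h => hx (hT.piece_subset i.2 h)) _]
    exact ⟨le_rfl, one_pos⟩

open Function in
lemma measurePreserving_translateOnPieces (hT : IsIntervalExchange r β T)
    (hv : ∀ i < r, ∀ x ∈ Ico (β i) (β (i + 1)), T x = x + v i) :
    MeasurePreserving (translateOnPieces r β v) (volume.restrict (Ico 0 1))
      (volume.restrict (Ico 0 1)) := by
  refine ⟨measurable_translateOnPieces r β v, ?_⟩
  set J : Fin r → Set ℝ := fun i => Ico (β i + v i) (β (i + 1) + v i)
  have hJ : ∀ i : Fin r, T '' Ico (β i) (β (i + 1)) = J i := fun i => by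
    rw [image_congr (hv i i.2), image_add_const_Ico]
  have hJdisj : Pairwise (Disjoint on J) := fun i k hik => by
    rw [onFun, ← hJ, ← hJ, disjoint_iff_inter_eq_empty,
      ← hT.bijOn.injOn.image_inter (hT.piece_subset i.2) (hT.piece_subset k.2),
      (hT.pairwise_disjoint_piece hik).inter_eq, image_empty]
  have hJunion : ⋃ i, J i = Ico 0 1 := by
    simp_rw [← hJ, ← image_iUnion, hT.iUnion_piece, hT.bijOn.image_eq]
  have hpiece : ∀ i : Fin r,
      (volume.restrict (Ico (β i) (β (i + 1)))).map (translateOnPieces r β v) =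
        volume.restrict (J i) := fun i => by
    rw [Measure.map_congr ((ae_restrict_mem measurableSet_Ico).mono
      fun x hx => hT.translateOnPieces_eq (v := v) i hx)]
    simpa [J] using ((measurePreserving_add_right volume (v i)).restrict_preimage
      (measurableSet_Ico (a := β i + v i) (b := β (i + 1) + v i))).map_eq
  calc (volume.restrict (Ico 0 1)).map (translateOnPieces r β v)
      = (Measure.sum fun i : Fin r => volume.restrict (Ico (β i) (β (i + 1)))).map
          (translateOnPieces r β v) := by
        rw [← Measure.restrict_iUnion hT.pairwise_disjoint_piece fun _ => measurableSet_Ico,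
          hT.iUnion_piece]
    _ = Measure.sum fun i => volume.restrict (J i) := by
        rw [Measure.map_sum (measurable_translateOnPieces r β v).aemeasurable]
        exact congrArg Measure.sum (funext hpiece)
    _ = volume.restrict (Ico 0 1) := by
        rw [← Measure.restrict_iUnion hJdisj fun _ => measurableSet_Ico, hJunion]

lemma div_le_measureReal_Ico (hT : IsIntervalExchange r β T) {Tinv : ℝ → ℝ}
    (hTinv : LeftInvOn Tinv T (Ico 0 1)) {c : ℝ} (hc : 0 < c)
    (hbal : BalancedPartitionLengths r β T Tinv c)
    (hv : ∀ i < r, ∀ x ∈ Ico (β i) (β (i + 1)), T x = x + v i) {ρ : Measure ℝ}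
    [IsProbabilityMeasure ρ] (hρ : MeasurePreserving (translateOnPieces r β v) ρ ρ)
    {u w : ℝ} (hu : 0 ≤ u) (huw : u < w) (hw : w ≤ 1) : (w - u) / c ≤ ρ.real (Ico u w) := by
  have hsupp : ∀ᵐ x ∂ρ, x ∈ Ico (0 : ℝ) 1 := by
    have : translateOnPieces r β v ⁻¹' (Ico (0 : ℝ) 1)ᶜ = ∅ :=
      eq_empty_of_forall_notMem fun x hx => hx (hT.translateOnPieces_mem hv x)
    rw [ae_iff, ← compl_def, ← hρ.measure_preimage measurableSet_Ico.compl.nullMeasurableSet,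
      this, measure_empty]
  refine hρ.le_measureReal_of_le_birkhoffSum measurableSet_Ico (K := 2) ?_
  filter_upwards [eventually_ge_atTop ⌈c / (w - u)⌉₊, eventually_ge_atTop 1] with n hn hn1
  filter_upwards [hsupp] with x hx
  have hn0 : (0 : ℝ) < n := by exact_mod_cast hn1
  have hcn : c / n ≤ w - u := by
    rw [div_le_iff₀ hn0, ← div_le_iff₀' (by linarith)]
    exact (Nat.le_ceil _).trans (by exact_mod_cast hn)
  have hcount := hT.div_sub_two_le_card_iterate_mem_Ico hTinv hn1 (div_pos hc hn0)
    (fun a b h => (hbal.1 n hn1 a b h).2)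
    (fun i hi k hk a b h => (hbal.2 n hn1 i hi k hk a b h).2) hu hw hcn hx
  rw [birkhoffSum_indicator_one, Finset.filter_congr fun l _ => by
    rw [(hT.translateOnPieces_eqOn hv).iterate hT.bijOn.mapsTo l hx]]
  convert hcount using 2
  field_simp

lemma volume_restrict_absolutelyContinuous (hT : IsIntervalExchange r β T) {Tinv : ℝ → ℝ}
    (hTinv : LeftInvOn Tinv T (Ico 0 1)) {c : ℝ} (hc : 0 < c)
    (hbal : BalancedPartitionLengths r β T Tinv c)
    (hv : ∀ i < r, ∀ x ∈ Ico (β i) (β (i + 1)), T x = x + v i) {ρ : Measure ℝ}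
    [IsProbabilityMeasure ρ] (hρ : MeasurePreserving (translateOnPieces r β v) ρ ρ) :
    volume.restrict (Ico (0 : ℝ) 1) ≪ ρ := by
  have hIco : ∀ u w : ℝ, 0 ≤ u → u < w → w ≤ 1 →
      volume (Ico u w) ≤ (c.toNNReal • ρ) (Ico u w) := fun u w hu huw hw =>
    calc volume (Ico u w) ≤ ENNReal.ofReal (c * ρ.real (Ico u w)) := by
          rw [Real.volume_Ico]
          exact ENNReal.ofReal_le_ofReal ((div_le_iff₀' hc).1
            (hT.div_le_measureReal_Ico hTinv hc hbal hv hρ hu huw hw))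
      _ = (c.toNNReal • ρ) (Ico u w) := by
          rw [ENNReal.ofReal_mul hc.le, ofReal_measureReal, Measure.smul_apply, ENNReal.smul_def,
            smul_eq_mul, ENNReal.ofReal]
  refine Measure.absolutelyContinuous_of_le_smul (c := c.toNNReal) ?_
  rw [Measure.coe_nnreal_smul]
  exact Measure.le_of_forall_isOpen_le fun U hU => volume_restrict_Ico_le_of_isOpen hIco hU

end IsIntervalExchange

theorem stmt4_general
    (r : ℕ)
    (β : ℕ → ℝ) (hβ0 : β 0 = 0) (hβr : β r = 1)
    (hβmono : ∀ i j : ℕ, i < j → j ≤ r → β i < β j)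
    (T Tinv : ℝ → ℝ)
    (hTbij : Set.BijOn T (Set.Ico 0 1) (Set.Ico 0 1))
    (hTtrans : ∀ i : ℕ, i < r → ∃ v : ℝ, ∀ x ∈ Set.Ico (β i) (β (i + 1)), T x = x + v)
    (hTinv : ∀ x ∈ Set.Ico (0 : ℝ) 1,
      Tinv (T x) = x ∧ T (Tinv x) = x ∧ Tinv x ∈ Set.Ico (0 : ℝ) 1)
    (c : ℝ) (hc : 0 < c)
    (hbal : BalancedPartitionLengths r β T Tinv c) :
    ∀ μ : Measure ℝ, IsProbabilityMeasure μ → μ (Set.Ico (0 : ℝ) 1)ᶜ = 0 →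
      μ.map T = μ → μ = volume.restrict (Set.Ico (0 : ℝ) 1) := by
  intro μ _ hμI hμT
  have hT : IsIntervalExchange r β T := ⟨hβ0, hβr, hβmono, hTbij, hTtrans⟩
  have hTinv' : LeftInvOn Tinv T (Ico 0 1) := fun x hx => (hTinv x hx).1
  choose! v hv using hTtrans
  have hμ : MeasurePreserving (translateOnPieces r β v) μ μ := by
    refine ⟨measurable_translateOnPieces r β v, ?_⟩
    rwa [Measure.map_congr (measure_eq_zero_iff_ae_notMem.1 hμI |>.mono
      fun x hx => hT.translateOnPieces_eqOn hv (not_not.1 hx))]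
  have : IsProbabilityMeasure (volume.restrict (Ico (0 : ℝ) 1)) := ⟨by simp⟩
  have hν := fun ρ (_ : IsProbabilityMeasure ρ) =>
    hT.volume_restrict_absolutelyContinuous hTinv' hc hbal hv (ρ := ρ)
  exact ((Ergodic.of_forall_absolutelyContinuous (IsProbabilityMeasure.ne_zero _) hν hμ
    ).eq_of_absolutelyContinuous (hT.measurePreserving_translateOnPieces hv) (hν μ ‹_› hμ)).symm

/-- Corollary 4.6: every IET with balanced partition lengths is uniquely
ergodic: Lebesgue measure on `[0,1)` is the unique `T`-invariant Borel probability
measure on `[0,1)`. -/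
theorem stmt4
    (r : ℕ) (hr : 2 ≤ r)
    (β : ℕ → ℝ) (hβ0 : β 0 = 0) (hβr : β r = 1)
    (hβmono : ∀ i j : ℕ, i < j → j ≤ r → β i < β j)
    (T Tinv : ℝ → ℝ)
    (hTbij : Set.BijOn T (Set.Ico 0 1) (Set.Ico 0 1))
    (hTtrans : ∀ i : ℕ, i < r → ∃ v : ℝ, ∀ x ∈ Set.Ico (β i) (β (i + 1)), T x = x + v)
    (hTinv : ∀ x ∈ Set.Ico (0 : ℝ) 1,
      Tinv (T x) = x ∧ T (Tinv x) = x ∧ Tinv x ∈ Set.Ico (0 : ℝ) 1)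
    (c : ℝ) (hc : 0 < c)
    (hbal : BalancedPartitionLengths r β T Tinv c) :
    ∀ μ : Measure ℝ, IsProbabilityMeasure μ → μ (Set.Ico (0 : ℝ) 1)ᶜ = 0 →
      μ.map T = μ → μ = volume.restrict (Set.Ico (0 : ℝ) 1) :=
  stmt4_general r β hβ0 hβr hβmono T Tinv hTbij hTtrans hTinv c hc hbal
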